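/- The elements ξ̄_1, ξ̄_2, ξ̄_3, … are algebraically independent over ZMod 2 in the algebra 𝓕₂*: the monomials ξ̄_1^{l_1} ξ̄_2^{l_2} ⋯ ξ̄_n^{l_n}, as (l_1,…,l_n) ranges over all distinct finite sequences of nonnegative integers (with l_n > 0), are linearly independent over ZMod 2. Hence the subalgebra of 𝓕₂* generated by the ξ̄_n is a polynomial algebra ZMod 2[ξ̄_1, ξ̄_2, …]. -/

import Mathlib

/-- The overlapping shuffle product of two finite sequences, as a multiset
(counting multiplicities). -/
def osp : List ℕ → List ℕ → Multiset (List ℕ)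
  | A, [] => {A}
  | [], B => {B}
  | a :: A, b :: B =>
      ((osp A (b :: B)).map (a :: ·)) +
      ((osp (a :: A) B).map (b :: ·)) +
      ((osp A B).map ((a + b) :: ·))
termination_by A B => A.length + B.length
decreasing_by all_goals (simp only [List.length_cons]; omega)

/-- The underlying free module over `ZMod 2` on the set of finite sequences
(this carries the mod 2 dual Leibniz--Hopf algebra `𝓕₂*`). -/
abbrev F2D : Type := (List ℕ) →₀ ZMod 2

/-- The basis element `S_I`. -/
noncomputable def sElem (I : List ℕ) : F2D := Finsupp.single I 1

/-- The element of `𝓕₂*` associated to a multiset of sequences, keeping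
multiplicities mod 2. -/
noncomputable def ofMS (m : Multiset (List ℕ)) : F2D := (m.map sElem).sum

/-- The bilinear product of `𝓕₂*`: on basis elements,
`S_I · S_J = Σ_K (multiplicity of K in osp I J mod 2) • S_K`. -/
noncomputable def fmul (x y : F2D) : F2D :=
  x.sum fun I a => y.sum fun J b => (a * b) • ofMS (osp I J)

/-- Powers in `𝓕₂*` (with `S_{()}` the unit). -/
noncomputable def fpow (x : F2D) : ℕ → F2D
  | 0 => sElem []
  | n + 1 => fmul x (fpow x n)

/-- Product of a list of elements of `𝓕₂*` (with `S_{()}` the unit). -/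
noncomputable def fprod : List F2D → F2D
  | [] => sElem []
  | x :: xs => fmul x (fprod xs)

/-- `ξ̄_n = S_{(2^{n−1}, 2^{n−2}, …, 2, 1)}`. -/
noncomputable def xibar (n : ℕ) : F2D := sElem (((List.range n).map (2 ^ ·)).reverse)

/-- The monomial `ξ̄_1^{l_1} · ξ̄_2^{l_2} ⋯ ξ̄_n^{l_n}` for `L = (l_1,…,l_n)`. -/
noncomputable def xiMonomial (L : List ℕ) : F2D :=
  fprod (L.mapIdx fun i l => fpow (xibar (i + 1)) l)

/-!
Order sequences lexicographically. For sequences `I`, `J` of positive integers, the largest term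
of the overlapping shuffle product `I · J` is the entrywise sum `I + J` (the shorter one padded
with zeros), and it occurs exactly once; positivity matters, since `[] < [0]` while
`[1] + [] = [1] + [0]`. Hence a product of basis elements `S_I` with positive `I`'s has as
leading term the entrywise sum of the `I`'s, with coefficient `1`. For the monomial
`ξ̄_1^{l_1} ⋯ ξ̄_n^{l_n}` with `l_n > 0` this is the sequence `E` of length `n` with
`E_{j-1} = l_j + 2 E_j` (and `E_n = 0`), from which the exponents are recovered. Distinct
monomials thus have distinct leading terms, and triangularity gives linear independence.
-/

open Function

section SimpleMax

variable {α β : Type*} [DecidableEq α] [DecidableEq β]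

def Multiset.IsSimpleMax [LE α] (m : Multiset α) (a : α) : Prop :=
  (∀ b ∈ m, b ≤ a) ∧ m.count a = 1

theorem Multiset.IsSimpleMax.mem [LE α] {m : Multiset α} {a : α} (h : m.IsSimpleMax a) : a ∈ m :=
  Multiset.count_pos.1 (h.2 ▸ one_pos)

theorem Multiset.IsSimpleMax.bind [PartialOrder α] [Preorder β] {m : Multiset α} {a : α}
    {f : α → Multiset β} {g : α → β} (hm : m.IsSimpleMax a)
    (hf : ∀ x ∈ m, (f x).IsSimpleMax (g x)) (hg : ∀ x ∈ m, x < a → g x < g a) :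
    (m.bind f).IsSimpleMax (g a) := by
  have hlt : ∀ x ∈ m, x ≠ a → ∀ y ∈ f x, y < g a := fun x hx hxa y hy =>
    ((hf x hx).1 y hy).trans_lt (hg x hx (lt_of_le_of_ne (hm.1 x hx) hxa))
  refine ⟨fun y hy => ?_, ?_⟩
  · obtain ⟨x, hx, hy⟩ := Multiset.mem_bind.1 hy
    by_cases hxa : x = a
    · exact hxa ▸ (hf x hx).1 y hy
    · exact (hlt x hx hxa y hy).le
  · have herase : ∀ x ∈ m.erase a, (f x).count (g a) = 0 := by
      intro x hx
      have hxa : x ≠ a := by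
        rintro rfl
        have := Multiset.count_pos.2 hx
        rw [Multiset.count_erase_self, hm.2] at this
        exact this.false
      exact Multiset.count_eq_zero.2 fun hmem =>
        (hlt x (Multiset.mem_of_mem_erase hx) hxa _ hmem).false
    rw [← Multiset.cons_erase hm.mem, Multiset.cons_bind, Multiset.count_add, (hf a hm.mem).2,
      Multiset.count_bind, Multiset.map_congr rfl herase, Multiset.map_const',
      Multiset.sum_replicate, smul_zero, add_zero]

end SimpleMax

theorem Finsupp.linearIndependent_of_triangular {ι κ R : Type*} [Ring R] [NoZeroDivisors R]
    [LinearOrder κ] {v : ι → κ →₀ R} {lead : ι → κ} (hinj : Injective lead)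
    (hlead : ∀ i, v i (lead i) ≠ 0) (hzero : ∀ i k, lead i < k → v i k = 0) :
    LinearIndependent R v := by
  rw [linearIndependent_iff]
  intro c hc
  by_contra hne
  obtain ⟨i₀, hi₀, hmax⟩ :=
    Finset.exists_max_image c.support lead (Finsupp.support_nonempty_iff.2 hne)
  have heval := DFunLike.congr_fun hc (lead i₀)
  rw [Finsupp.linearCombination_apply, Finsupp.sum_apply, Finsupp.sum,
    Finset.sum_eq_single i₀ (fun i hi hne => ?_) (absurd hi₀)] at heval
  · exact mul_ne_zero (Finsupp.mem_support_iff.1 hi₀) (hlead i₀) heval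
  · rw [Finsupp.smul_apply, hzero i _ ((hmax i hi).lt_of_ne (hinj.ne hne)), smul_zero]

def addSeq : List ℕ → List ℕ → List ℕ
  | [], B => B
  | A, [] => A
  | a :: A, b :: B => (a + b) :: addSeq A B

@[simp] theorem nil_addSeq (B : List ℕ) : addSeq [] B = B := rfl

@[simp] theorem addSeq_nil (A : List ℕ) : addSeq A [] = A := by cases A <;> rfl

@[simp] theorem cons_addSeq_cons (a b : ℕ) (A B : List ℕ) :
    addSeq (a :: A) (b :: B) = (a + b) :: addSeq A B := rfl

theorem addSeq_comm : ∀ A B : List ℕ, addSeq A B = addSeq B A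
  | [], B => by simp
  | a :: A, [] => by simp
  | a :: A, b :: B => by simp [addSeq_comm A B, Nat.add_comm]

theorem zero_notMem_addSeq : ∀ {A B : List ℕ}, 0 ∉ A → 0 ∉ B → 0 ∉ addSeq A B
  | [], _, _, hB => hB
  | _ :: _, [], hA, _ => by simpa using hA
  | a :: A, b :: B, hA, hB => by
    simp only [List.mem_cons, not_or] at hA hB
    simp only [cons_addSeq_cons, List.mem_cons, not_or]
    exact ⟨by omega, zero_notMem_addSeq hA.2 hB.2⟩

theorem addSeq_lt_addSeq_right : ∀ (I : List ℕ) {J T : List ℕ}, 0 ∉ T → J < T →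
    addSeq I J < addSeq I T
  | [], _, _, _, h => h
  | _ :: _, _, [], _, h => absurd h (List.not_lt_nil _)
  | i :: I, [], t :: T, hT, _ => by
    simp only [List.mem_cons, not_or] at hT
    simp only [addSeq_nil, cons_addSeq_cons, List.cons_lt_cons_iff]
    omega
  | i :: I, j :: J, t :: T, hT, h => by
    simp only [List.mem_cons, not_or] at hT
    simp only [cons_addSeq_cons, List.cons_lt_cons_iff] at h ⊢
    rcases h with h | ⟨rfl, h⟩
    · omega
    · exact .inr ⟨rfl, addSeq_lt_addSeq_right I hT.2 h⟩

theorem addSeq_lt_addSeq_left {I S : List ℕ} (J : List ℕ) (hS : 0 ∉ S) (h : I < S) :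
    addSeq I J < addSeq S J := by
  rw [addSeq_comm I, addSeq_comm S]
  exact addSeq_lt_addSeq_right J hS h

@[simp] theorem osp_nil_right (A : List ℕ) : osp A [] = {A} := by cases A <;> simp [osp]

@[simp] theorem osp_nil_left (B : List ℕ) : osp [] B = {B} := by cases B <;> simp [osp]

theorem osp_cons_cons (a b : ℕ) (A B : List ℕ) :
    osp (a :: A) (b :: B) = (osp A (b :: B)).map (a :: ·) + (osp (a :: A) B).map (b :: ·) +
      (osp A B).map ((a + b) :: ·) := by
  simp [osp]

theorem zero_notMem_of_mem_osp {A B K : List ℕ} (hA : 0 ∉ A) (hB : 0 ∉ B) (hK : K ∈ osp A B) :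
    0 ∉ K := by
  induction A, B using osp.induct generalizing K with
  | case1 A => simp_all
  | case2 B => simp_all
  | case3 a A b B ih₁ ih₂ ih₃ =>
    simp only [List.mem_cons, not_or] at hA hB
    simp only [osp_cons_cons, Multiset.mem_add, Multiset.mem_map] at hK
    rcases hK with (⟨K, hK, rfl⟩ | ⟨K, hK, rfl⟩) | ⟨K, hK, rfl⟩ <;>
      simp only [List.mem_cons, not_or]
    · exact ⟨hA.1, ih₁ hA.2 (by simp [hB.1, hB.2]) hK⟩
    · exact ⟨hB.1, ih₂ (by simp [hA.1, hA.2]) hB.2 hK⟩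
    · exact ⟨by omega, ih₃ hA.2 hB.2 hK⟩

theorem isSimpleMax_osp {A B : List ℕ} (hA : 0 ∉ A) (hB : 0 ∉ B) :
    (osp A B).IsSimpleMax (addSeq A B) := by
  induction A, B using osp.induct with
  | case1 A => simp [Multiset.IsSimpleMax]
  | case2 B => simp [Multiset.IsSimpleMax]
  | case3 a A b B ih₁ ih₂ ih₃ =>
    have hA' : 0 ∉ A := fun h => hA (List.mem_cons_of_mem a h)
    have hB' : 0 ∉ B := fun h => hB (List.mem_cons_of_mem b h)
    have ha : 0 < a := Nat.pos_of_ne_zero fun h => hA (h ▸ List.mem_cons_self)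
    have hb : 0 < b := Nat.pos_of_ne_zero fun h => hB (h ▸ List.mem_cons_self)
    obtain ⟨hle₃, hcount₃⟩ := ih₃ hA' hB'
    rw [cons_addSeq_cons, osp_cons_cons]
    refine ⟨fun K hK => ?_, ?_⟩
    · simp only [Multiset.mem_add, Multiset.mem_map] at hK
      rcases hK with (⟨K, -, rfl⟩ | ⟨K, -, rfl⟩) | ⟨K, hK, rfl⟩
      · exact (List.cons_lt_cons_iff.2 (.inl (by omega))).le
      · exact (List.cons_lt_cons_iff.2 (.inl (by omega))).le
      · rcases (hle₃ K hK).lt_or_eq with h | h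
        · exact (List.cons_lt_cons_iff.2 (.inr ⟨rfl, h⟩)).le
        · rw [h]
    · have head_ne : ∀ (c : ℕ) (X : Multiset (List ℕ)), c ≠ a + b →
          (X.map (c :: ·)).count ((a + b) :: addSeq A B) = 0 := fun c X hc =>
        Multiset.count_eq_zero.2 fun h => by
          obtain ⟨K, -, hK⟩ := Multiset.mem_map.1 h
          exact hc (List.cons.inj hK).1
      rw [Multiset.count_add, Multiset.count_add, head_ne a _ (by omega), head_ne b _ (by omega),
        Multiset.count_map_eq_count' _ _ List.cons_injective, hcount₃]

theorem ofMS_add (m m' : Multiset (List ℕ)) : ofMS (m + m') = ofMS m + ofMS m' := by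
  simp [ofMS]

theorem ofMS_singleton (K : List ℕ) : ofMS {K} = sElem K := by
  simp [ofMS]

theorem ofMS_apply (m : Multiset (List ℕ)) (K : List ℕ) : ofMS m K = m.count K := by
  induction m using Multiset.induction with
  | empty => simp [ofMS]
  | cons J m ih =>
    rw [← Multiset.singleton_add, ofMS_add, Finsupp.add_apply, ih, ofMS_singleton, sElem,
      Finsupp.single_apply, Multiset.count_add, Multiset.count_singleton]
    obtain rfl | hJK := eq_or_ne J K
    · simp
    · simp [hJK, hJK.symm]

theorem fmul_add_left (x x' y : F2D) : fmul (x + x') y = fmul x y + fmul x' y :=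
  Finsupp.sum_add_index' (fun _ => by simp [Finsupp.sum]) fun _ _ _ => by
    simp only [add_mul, add_smul, Finsupp.sum_add]

theorem fmul_sElem_left (I : List ℕ) (y : F2D) :
    fmul (sElem I) y = y.sum fun J b => b • ofMS (osp I J) := by
  rw [fmul, sElem, Finsupp.sum_single_index] <;> simp [Finsupp.sum]

theorem fmul_sElem_ofMS (I : List ℕ) (m : Multiset (List ℕ)) :
    fmul (sElem I) (ofMS m) = ofMS (m.bind (osp I)) := by
  rw [fmul_sElem_left]
  induction m using Multiset.induction with
  | empty => simp [ofMS]
  | cons J m ih =>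
    rw [← Multiset.singleton_add, ofMS_add, Finsupp.sum_add_index' (by simp) (by simp [add_smul]),
      ih, ofMS_singleton, sElem, Finsupp.sum_single_index (by simp), one_smul,
      Multiset.add_bind, Multiset.singleton_bind, ofMS_add]

theorem fmul_ofMS_ofMS (m m' : Multiset (List ℕ)) :
    fmul (ofMS m) (ofMS m') = ofMS (m.bind fun I => m'.bind (osp I)) := by
  induction m using Multiset.induction with
  | empty => simp [ofMS, fmul]
  | cons I m ih =>
    rw [← Multiset.singleton_add, ofMS_add, fmul_add_left, ih, ofMS_singleton, fmul_sElem_ofMS,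
      Multiset.add_bind, Multiset.singleton_bind, ofMS_add]

def HasLeadingSeq (x : F2D) (S : List ℕ) : Prop :=
  ∃ m : Multiset (List ℕ), x = ofMS m ∧ (∀ K ∈ m, 0 ∉ K) ∧ m.IsSimpleMax S

theorem hasLeadingSeq_sElem {S : List ℕ} (hS : 0 ∉ S) : HasLeadingSeq (sElem S) S :=
  ⟨{S}, (ofMS_singleton S).symm, by simpa using hS, by simp [Multiset.IsSimpleMax]⟩

namespace HasLeadingSeq

variable {x y : F2D} {S T : List ℕ}

theorem zero_notMem (hx : HasLeadingSeq x S) : 0 ∉ S := by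
  obtain ⟨m, -, hm, hmS⟩ := hx
  exact hm S hmS.mem

theorem apply_self (hx : HasLeadingSeq x S) : x S = 1 := by
  obtain ⟨m, rfl, -, hmS⟩ := hx
  rw [ofMS_apply, hmS.2, Nat.cast_one]

theorem apply_of_lt (hx : HasLeadingSeq x S) {K : List ℕ} (hK : S < K) : x K = 0 := by
  obtain ⟨m, rfl, -, hmS⟩ := hx
  rw [ofMS_apply, Multiset.count_eq_zero.2 fun h => (hmS.1 K h).not_gt hK, Nat.cast_zero]

theorem mul (hx : HasLeadingSeq x S) (hy : HasLeadingSeq y T) :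
    HasLeadingSeq (fmul x y) (addSeq S T) := by
  have hS := hx.zero_notMem
  have hT := hy.zero_notMem
  obtain ⟨m, rfl, hm, hmS⟩ := hx
  obtain ⟨m', rfl, hm', hmT⟩ := hy
  refine ⟨_, fmul_ofMS_ofMS m m', ?_, ?_⟩
  · simp only [Multiset.mem_bind]
    rintro K ⟨I, hI, J, hJ, hK⟩
    exact zero_notMem_of_mem_osp (hm I hI) (hm' J hJ) hK
  · refine hmS.bind (fun I hI => hmT.bind (fun J hJ => isSimpleMax_osp (hm I hI) (hm' J hJ))
      fun J _ hJ => addSeq_lt_addSeq_right I hT hJ) fun I _ hI => addSeq_lt_addSeq_left T hS hI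

theorem pow (hx : HasLeadingSeq x S) (l : ℕ) :
    HasLeadingSeq (fpow x l) ((addSeq S)^[l] []) := by
  induction l with
  | zero => exact hasLeadingSeq_sElem List.not_mem_nil
  | succ l ih => rw [iterate_succ_apply']; exact hx.mul ih

end HasLeadingSeq

theorem hasLeadingSeq_fprod {xs : List F2D} {Ss : List (List ℕ)}
    (h : List.Forall₂ HasLeadingSeq xs Ss) : HasLeadingSeq (fprod xs) (Ss.foldr addSeq []) := by
  induction h with
  | nil => exact hasLeadingSeq_sElem List.not_mem_nil
  | cons hx _ ih => exact hx.mul ih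

def xibarSeq (n : ℕ) : List ℕ := ((List.range n).map (2 ^ ·)).reverse

theorem xibarSeq_succ (n : ℕ) : xibarSeq (n + 1) = 2 ^ n :: xibarSeq n := by
  simp [xibarSeq, List.range_succ]

theorem zero_notMem_xibarSeq (n : ℕ) : 0 ∉ xibarSeq n := by
  simp [xibarSeq]

theorem hasLeadingSeq_xibar (n : ℕ) : HasLeadingSeq (xibar n) (xibarSeq n) :=
  hasLeadingSeq_sElem (zero_notMem_xibarSeq n)

def consDouble : List ℕ → List ℕ
  | [] => []
  | a :: A => 2 * a :: a :: A

theorem consDouble_addSeq : ∀ A B : List ℕ,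
    consDouble (addSeq A B) = addSeq (consDouble A) (consDouble B)
  | [], _ => rfl
  | _ :: _, [] => by simp [consDouble]
  | a :: A, b :: B => by simp [consDouble]; ring

theorem xibarSeq_succ_succ (n : ℕ) : xibarSeq (n + 2) = consDouble (xibarSeq (n + 1)) := by
  rw [xibarSeq_succ (n + 1), xibarSeq_succ n, consDouble, pow_succ']

def leadSeq (L : List ℕ) : List ℕ :=
  (L.mapIdx fun i l => (addSeq (xibarSeq (i + 1)))^[l] []).foldr addSeq []

theorem hasLeadingSeq_xiMonomial (L : List ℕ) : HasLeadingSeq (xiMonomial L) (leadSeq L) :=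
  hasLeadingSeq_fprod <| List.forall₂_iff_get.2 ⟨by simp, fun i hi _ => by
    simpa using (hasLeadingSeq_xibar (i + 1)).pow (L[i]'(by simpa using hi))⟩

theorem leadSeq_cons_eq_addSeq (l : ℕ) (L : List ℕ) :
    leadSeq (l :: L) = addSeq ((addSeq [1])^[l] []) (consDouble (leadSeq L)) := by
  have hshift : L.mapIdx (fun i l => (addSeq (xibarSeq (i + 1 + 1)))^[l] []) =
      (L.mapIdx fun i l => (addSeq (xibarSeq (i + 1)))^[l] []).map consDouble := by
    refine List.ext_getElem (by simp) fun i _ _ => ?_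
    simp only [List.getElem_mapIdx, List.getElem_map, xibarSeq_succ_succ]
    exact ((Semiconj.iterate_right (consDouble_addSeq _) _) []).symm
  rw [leadSeq, List.mapIdx_cons, List.foldr_cons, hshift, List.foldr_map, leadSeq,
    ← List.foldr_hom consDouble fun A B => (consDouble_addSeq A B).symm]
  rfl

theorem iterate_addSeq_one_succ (l : ℕ) : (addSeq [1])^[l + 1] [] = [l + 1] := by
  induction l with
  | zero => rfl
  | succ l ih => rw [iterate_succ_apply', ih]; simp [Nat.add_comm]

theorem leadSeq_cons {l : ℕ} {L : List ℕ} (h : (l :: L).getLast? ≠ some 0) :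
    leadSeq (l :: L) = (l + 2 * (leadSeq L).headD 0) :: leadSeq L := by
  induction L generalizing l with
  | nil =>
    obtain ⟨k, rfl⟩ := Nat.exists_eq_succ_of_ne_zero (by simpa using h)
    rw [leadSeq_cons_eq_addSeq, iterate_addSeq_one_succ]
    rfl
  | cons l' L ih =>
    rw [List.getLast?_cons_cons] at h
    rw [leadSeq_cons_eq_addSeq, ih h, consDouble]
    cases l <;> simp [iterate_addSeq_one_succ]

theorem leadSeq_injOn : Set.InjOn leadSeq {L | L.getLast? ≠ some 0} := by
  intro L₁ h₁ L₂ h₂ heq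
  induction L₁ generalizing L₂ with
  | nil =>
    cases L₂ with
    | nil => rfl
    | cons l L => exact absurd heq (leadSeq_cons h₂ ▸ (List.cons_ne_nil _ _).symm)
  | cons l₁ L₁ ih =>
    cases L₂ with
    | nil => exact absurd heq (leadSeq_cons h₁ ▸ List.cons_ne_nil _ _)
    | cons l₂ L₂ =>
      have tail_ne : ∀ {l : ℕ} {L : List ℕ}, (l :: L).getLast? ≠ some 0 → L.getLast? ≠ some 0 :=
        fun h h' => h (by simp [List.getLast?_cons, h'])
      rw [leadSeq_cons h₁, leadSeq_cons h₂] at heq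
      obtain ⟨hhead, htail⟩ := List.cons.inj heq
      obtain rfl := ih (tail_ne h₁) (tail_ne h₂) htail
      rw [Nat.add_right_cancel hhead]

/-- The elements `ξ̄_1, ξ̄_2, …` are algebraically independent over `ZMod 2`:
the monomials `ξ̄_1^{l_1} ξ̄_2^{l_2} ⋯ ξ̄_n^{l_n}`, as `(l_1,…,l_n)` ranges over
all distinct finite sequences of nonnegative integers with `l_n > 0`, are
linearly independent over `ZMod 2` in `𝓕₂*`. -/
theorem xiMonomial_linearIndependent :
    LinearIndependent (ZMod 2)
      (fun L : {L : List ℕ // L.getLast? ≠ some 0} => xiMonomial L.val) :=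
  Finsupp.linearIndependent_of_triangular (lead := fun L => leadSeq L.val)
    (fun L₁ L₂ h => Subtype.ext (leadSeq_injOn L₁.2 L₂.2 h))
    (fun L => by simp [(hasLeadingSeq_xiMonomial L.val).apply_self])
    (fun L _ h => (hasLeadingSeq_xiMonomial L.val).apply_of_lt h)
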